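/- arXiv:2111.07917 — 5 statements merged into one kernel-verified Lean document; each statement's English description precedes it below -/
import Mathlib

section
/- Let f be a monotone submodular set function on a finite ground set N with f(∅) ≥ 0, let k ≥ 1, and let A ⊆ N with |A| ≥ k. Let A' be the set of the last k elements added to A by a process in which each element a added to A satisfied the marginal-gain condition f(A_prev ∪ {a}) - f(A_prev) ≥ f(A_prev)/k (where A_prev is the value of A just before a was added). Then f(A \ A') ≤ f(A)/2, and consequently f(A') ≥ f(A)/2. -/
/-!
Each of the last `k` additions multiplies the value of `f` by at least `1 + 1/k`, and
`(1 + 1/k)^k ≥ 2` by Bernoulli's inequality, so the value before those additions is at most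
half the final value. Every element of `A \ A'` was added before them, so by monotonicity
`f (A \ A') ≤ f A / 2`; subadditivity of `f`, a consequence of submodularity, gives
`f A ≤ f (A \ A') + f A'`.
-/

open Finset

lemma apply_union_add_apply_empty_le_of_submodular {α : Type*} [DecidableEq α]
    (f : Finset α → ℝ)
    (hmono : ∀ S T : Finset α, S ⊆ T → f S ≤ f T)
    (hsub : ∀ S T : Finset α, S ⊆ T → ∀ x ∉ T,
      f (insert x T) - f T ≤ f (insert x S) - f S)
    (S T : Finset α) : f (S ∪ T) + f ∅ ≤ f S + f T := by
  induction T using Finset.induction_on with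
  | empty => simp
  | @insert x T _ ih =>
    rw [union_insert]
    by_cases hx : x ∈ S ∪ T
    · rw [insert_eq_self.2 hx]
      linarith [hmono T (insert x T) (subset_insert x T)]
    · linarith [hsub T (S ∪ T) subset_union_right x hx]

lemma pow_mul_le_of_forall_mul_le {u : ℕ → ℝ} {c : ℝ} (hc : 0 ≤ c) {n j : ℕ}
    (hstep : ∀ i, n ≤ i → i < n + j → c * u i ≤ u (i + 1)) :
    c ^ j * u n ≤ u (n + j) := by
  induction j with
  | zero => simp
  | succ j ih =>
    calc c ^ (j + 1) * u n = c * (c ^ j * u n) := by ring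
      _ ≤ c * u (n + j) :=
        mul_le_mul_of_nonneg_left (ih fun i hi hij => hstep i hi (by omega)) hc
      _ ≤ u (n + (j + 1)) := hstep (n + j) (by omega) (by omega)

lemma two_le_one_add_inv_pow {k : ℕ} (hk : 1 ≤ k) : (2 : ℝ) ≤ (1 + 1 / k) ^ k := by
  have hk0 : (k : ℝ) ≠ 0 := by positivity
  calc (2 : ℝ) = 1 + k * (1 / k) := by field_simp; norm_num
    _ ≤ (1 + 1 / k) ^ k :=
      one_add_mul_le_pow (by linarith [show (0 : ℝ) ≤ 1 / k by positivity]) k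

lemma two_mul_le_of_forall_gain {u : ℕ → ℝ} {k n : ℕ} (hk : 1 ≤ k) (hu : 0 ≤ u n)
    (hgain : ∀ i, n ≤ i → i < n + k → u i / k ≤ u (i + 1) - u i) :
    2 * u n ≤ u (n + k) :=
  calc 2 * u n ≤ (1 + 1 / k) ^ k * u n :=
        mul_le_mul_of_nonneg_right (two_le_one_add_inv_pow hk) hu
    _ ≤ u (n + k) := pow_mul_le_of_forall_mul_le (by positivity) fun i hi hik => by
      have := hgain i hi hik
      rw [add_mul, one_mul, one_div_mul_eq_div]
      linarith

theorem stmt0_general {α : Type*} [DecidableEq α] (f : Finset α → ℝ)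
    (hmono : ∀ S T : Finset α, S ⊆ T → f S ≤ f T)
    (hsub : ∀ S T : Finset α, S ⊆ T → ∀ x ∉ T,
      f (insert x T) - f T ≤ f (insert x S) - f S)
    (hempty : 0 ≤ f ∅)
    (k : ℕ) (hk : 1 ≤ k) (m : ℕ) (hm : k ≤ m)
    (a : ℕ → α)
    (hgain : ∀ i < m,
      f (insert (a i) ((Finset.range i).image a)) - f ((Finset.range i).image a)
        ≥ f ((Finset.range i).image a) / k) :
    f ((Finset.range m).image a \ ((Finset.Ico (m - k) m).image a))
        ≤ f ((Finset.range m).image a) / 2 ∧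
    f ((Finset.Ico (m - k) m).image a) ≥ f ((Finset.range m).image a) / 2 := by
  set A : ℕ → Finset α := fun i => (range i).image a with hA
  set A' := (Ico (m - k) m).image a
  change f (A m \ A') ≤ f (A m) / 2 ∧ f A' ≥ f (A m) / 2
  have hnonneg : ∀ S, 0 ≤ f S := fun S => hempty.trans (hmono _ _ (empty_subset S))
  have hdouble : 2 * f (A (m - k)) ≤ f (A m) := by
    have h := two_mul_le_of_forall_gain (u := fun i => f (A i)) (n := m - k) hk (hnonneg _)
      fun i _ hi => by
        simp only [hA, range_add_one, image_insert]
        exact hgain i (by omega)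
    rwa [Nat.sub_add_cancel hm] at h
  have hrest : A m \ A' ⊆ A (m - k) := by
    intro x hx
    obtain ⟨hxA, hnot⟩ := mem_sdiff.1 hx
    obtain ⟨i, hi, rfl⟩ := mem_image.1 hxA
    refine mem_image_of_mem a (mem_range.2 ?_)
    by_contra hik
    exact hnot (mem_image_of_mem a (mem_Ico.2 ⟨by omega, mem_range.1 hi⟩))
  have hfirst : f (A m \ A') ≤ f (A m) / 2 := by
    linarith [hmono _ _ hrest]
  have hsplit := apply_union_add_apply_empty_le_of_submodular f hmono hsub (A m \ A') A'
  rw [sdiff_union_of_subset (image_subset_image fun i hi => mem_range.2 (mem_Ico.1 hi).2)]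
    at hsplit
  exact ⟨hfirst, by linarith⟩

/-- For a monotone submodular `f` with `f ∅ ≥ 0`, if `A` is built by
adding elements `a 0, a 1, …, a (m-1)` one at a time, each satisfying the
marginal-gain condition `f(A_prev ∪ {a i}) - f(A_prev) ≥ f(A_prev)/k`, and `m ≥ k`,
then with `A'` the last `k` elements added, `f(A \ A') ≤ f(A)/2` and `f(A') ≥ f(A)/2`. -/
theorem stmt0 {α : Type*} [DecidableEq α] (f : Finset α → ℝ)
    (hmono : ∀ S T : Finset α, S ⊆ T → f S ≤ f T)
    (hsub : ∀ S T : Finset α, S ⊆ T → ∀ x ∉ T,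
      f (insert x T) - f T ≤ f (insert x S) - f S)
    (hempty : 0 ≤ f ∅)
    (k : ℕ) (hk : 1 ≤ k) (m : ℕ) (hm : k ≤ m)
    (a : ℕ → α) (hinj : ∀ i < m, ∀ j < m, a i = a j → i = j)
    (hgain : ∀ i < m,
      f (insert (a i) ((Finset.range i).image a)) - f ((Finset.range i).image a)
        ≥ f ((Finset.range i).image a) / k) :
    f ((Finset.range m).image a \ ((Finset.Ico (m - k) m).image a))
        ≤ f ((Finset.range m).image a) / 2 ∧
    f ((Finset.Ico (m - k) m).image a) ≥ f ((Finset.range m).image a) / 2 :=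
  stmt0_general f hmono hsub hempty k hk m hm a hgain
end

section
/- For all real x with 0 ≤ x ≤ 1, it holds that exp(-(1 - x/3)(1 - x)/(1 + x/3)) ≤ 1/e + x. -/
set_option maxHeartbeats 1000000

lemma exp_le_aux (t : ℝ) (ht : 0 < 1 - t) : Real.exp t ≤ 1 / (1 - t) := by
  rw [le_div_iff₀ ht]
  have h := Real.add_one_le_exp (-t)
  calc Real.exp t * (1 - t) ≤ Real.exp t * Real.exp (-t) := by
        apply mul_le_mul_of_nonneg_left _ (Real.exp_pos t).le
        linarith
    _ = 1 := by rw [← Real.exp_add]; simp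

/-- for `0 ≤ x ≤ 1`, `exp(-(1 - x/3)(1 - x)/(1 + x/3)) ≤ 1/e + x`. -/
theorem stmt5 (x : ℝ) (h0 : 0 ≤ x) (h1 : x ≤ 1) :
    Real.exp (-((1 - x / 3) * (1 - x) / (1 + x / 3))) ≤ Real.exp (-1) + x := by
  have h3 : (0:ℝ) < 3 + x := by linarith
  have hd : (0:ℝ) < 1 + x / 3 := by linarith
  have hE : -((1 - x / 3) * (1 - x) / (1 + x / 3)) = x * (5 - x) / (3 + x) - 1 := by
    field_simp
    ring
  have hy1 : (2.7182818283:ℝ) < Real.exp 1 := Real.exp_one_gt_d9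
  have hy2 : Real.exp 1 < 2.7182818286 := Real.exp_one_lt_d9
  have hyp : (0:ℝ) < Real.exp 1 := Real.exp_pos 1
  set y := Real.exp 1 with hy
  have hneg : Real.exp (-1 : ℝ) = 1 / y := by
    rw [Real.exp_neg, ← hy, one_div]
  rw [hE, hneg]
  set g : ℝ := x * (5 - x) / (3 + x) with hgdef
  clear_value y g
  have hg1 : g ≤ 1 := by
    rw [hgdef, div_le_one h3]
    nlinarith
  rcases le_or_gt x (3/10) with hc | hc
  · -- x ≤ 3/10 : use exp g ≤ 1/(1-g)
    have hglt : g < 1 := by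
      rw [hgdef, div_lt_one h3]
      nlinarith
    have h1g : 0 < 1 - g := by linarith
    have step : Real.exp (g - 1) ≤ 1 / ((1 - g) * y) := by
      rw [Real.exp_sub, ← hy, div_le_div_iff₀ hyp (by positivity)]
      have h := exp_le_aux g h1g
      rw [le_div_iff₀ h1g] at h
      nlinarith [mul_le_mul_of_nonneg_right h hyp.le]
    refine step.trans ?_
    rw [div_le_iff₀ (by positivity)]
    have hg1m : 1 - g = (1 - x) * (3 - x) / (3 + x) := by
      rw [hgdef]; field_simp; ring
    rw [hg1m]
    have hb : 0 ≤ 3*y - 5 + x*(1 - 4*y) + x^2*y := by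
      nlinarith [mul_nonneg (by linarith : (0:ℝ) ≤ 3/10 - x) (by linarith : (0:ℝ) ≤ 4*y - 1),
        mul_nonneg (sq_nonneg x) hyp.le]
    have key : (3 + x) ≤ (1 + x * y) * ((1 - x) * (3 - x)) := by
      nlinarith [mul_nonneg h0 hb]
    have expand : (1 / y + x) * ((1 - x) * (3 - x) / (3 + x) * y)
        = (1 + x * y) * ((1 - x) * (3 - x)) / (3 + x) := by
      field_simp
      try ring
    rw [expand, le_div_iff₀ h3]
    linarith
  · -- x > 3/10 : use exp(g-1) ≤ 1/(2-g)
    have h2g : 0 < 1 - (g - 1) := by linarith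
    have step : Real.exp (g - 1) ≤ 1 / (2 - g) := by
      have := exp_le_aux (g - 1) h2g
      convert this using 2
      ring
    refine step.trans ?_
    have h2gpos : 0 < 2 - g := by linarith
    rw [div_le_iff₀ h2gpos]
    have hg2m : 2 - g = (x^2 - 3*x + 6) / (3 + x) := by
      rw [hgdef]; field_simp; ring
    rw [hg2m]
    have ha' : (0:ℝ) ≤ x - 3/10 := by linarith
    have hb' : (0:ℝ) ≤ 1 - x := by linarith
    have hcub : x^3 - 3*x^2 + 5*x - 3 ≤ 0 := by nlinarith [sq_nonneg (x - 1)]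
    have hyc : y * (x^3 - 3*x^2 + 5*x - 3) ≥ 2.7182818286 * (x^3 - 3*x^2 + 5*x - 3) := by
      nlinarith [mul_nonneg (by linarith : (0:ℝ) ≤ 2.7182818286 - y)
        (by linarith : (0:ℝ) ≤ -(x^3 - 3*x^2 + 5*x - 3))]
    have hpoly : (0:ℝ) ≤ x^2 - 3*x + 6 + 2.7182818286 * (x^3 - 3*x^2 + 5*x - 3) := by
      nlinarith [mul_nonneg ha' hb', mul_nonneg (mul_nonneg ha' ha') ha']
    have key : y * (3 + x) ≤ (1 + x * y) * (x^2 - 3*x + 6) := by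
      nlinarith [hyc, hpoly]
    have expand : (1 / y + x) * ((x^2 - 3*x + 6) / (3 + x))
        = (1 + x * y) * (x^2 - 3*x + 6) / (y * (3 + x)) := by
      field_simp
      try ring
    rw [expand, le_div_iff₀ (by positivity)]
    linarith
end

section
/- Let f be monotone submodular with f(∅) ≥ 0, k ≥ 1, 0 < ε < 1, and τ > 0. Suppose a set A is built in rounds j = 1,…,ℓ, where in round j a block T_j of size |T_j| is added to the current set A_{j-1}, and there exists a prefix T̃_j ⊆ T_j (as a prefix of an ordered block) with |T̃_j| ≥ |T_j|/(1+ε) and f(A_{j-1} ∪ T̃_j) - f(A_{j-1}) ≥ (1-ε)τ|T̃_j|. Then for the final set A = A_ℓ, f(A) ≥ ((1-ε)/(1+ε)) · τ · |A|. -/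
/-- if `A` is built in rounds from pairwise disjoint blocks
`T 0, …, T (ℓ-1)`, and each round `j` has a prefix `T' ⊆ T j` with
`|T j| ≤ (1+ε)|T'|` and `f(A_j ∪ T') - f(A_j) ≥ (1-ε)τ|T'|`, then
`f A ≥ ((1-ε)/(1+ε)) τ |A|`. -/
theorem stmt11 {α : Type*} [DecidableEq α] (f : Finset α → ℝ)
    (hmono : ∀ S T : Finset α, S ⊆ T → f S ≤ f T)
    (hsub : ∀ S T : Finset α, S ⊆ T → ∀ x ∉ T,
      f (insert x T) - f T ≤ f (insert x S) - f S)
    (hempty : 0 ≤ f ∅)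
    (k : ℕ) (hk : 1 ≤ k)
    (ε τ : ℝ) (hε0 : 0 < ε) (hε1 : ε < 1) (hτ : 0 < τ)
    (ℓ : ℕ) (T : ℕ → Finset α)
    (hdisj : ∀ i < ℓ, ∀ j < ℓ, i ≠ j → Disjoint (T i) (T j))
    (hblock : ∀ j < ℓ, ∃ T' ⊆ T j,
      ((T j).card : ℝ) ≤ (1 + ε) * T'.card ∧
      f ((Finset.range j).biUnion T ∪ T') - f ((Finset.range j).biUnion T)
        ≥ (1 - ε) * τ * T'.card) :
    f ((Finset.range ℓ).biUnion T)
      ≥ ((1 - ε) / (1 + ε)) * τ * ((Finset.range ℓ).biUnion T).card := by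
  have hc : 0 ≤ (1 - ε) / (1 + ε) * τ := by
    apply mul_nonneg (div_nonneg (by linarith) (by linarith)) hτ.le
  induction ℓ with
  | zero => simpa using hempty
  | succ n ih =>
    have hstep := hblock n (Nat.lt_succ_self n)
    obtain ⟨T', hT'sub, hcard, hgain⟩ := hstep
    have ih' := ih (fun i hi j hj => hdisj i (hi.trans (Nat.lt_succ_self n)) j
      (hj.trans (Nat.lt_succ_self n)))
      (fun j hj => hblock j (hj.trans (Nat.lt_succ_self n)))
    set A := (Finset.range n).biUnion T with hA
    have hU : (Finset.range (n+1)).biUnion T = A ∪ T n := by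
      rw [Finset.range_add_one, Finset.biUnion_insert, Finset.union_comm]
    rw [hU]
    have h1 : f (A ∪ T') ≤ f (A ∪ T n) :=
      hmono _ _ (Finset.union_subset_union_right hT'sub)
    have h2 : (1 - ε) / (1 + ε) * τ * (T n).card ≤ (1 - ε) * τ * T'.card := by
      rw [div_mul_eq_mul_div, div_mul_eq_mul_div, div_le_iff₀ (by linarith)]
      calc (1 - ε) * τ * (T n).card ≤ (1 - ε) * τ * ((1 + ε) * T'.card) := by
            apply mul_le_mul_of_nonneg_left hcard (by nlinarith)
        _ = (1 - ε) * τ * T'.card * (1 + ε) := by ring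
    have h3 : ((A ∪ T n).card : ℝ) ≤ A.card + (T n).card := by
      exact_mod_cast Finset.card_union_le A (T n)
    have h4 : (1 - ε) / (1 + ε) * τ * ((A ∪ T n).card : ℝ)
        ≤ (1 - ε) / (1 + ε) * τ * (A.card + (T n).card) :=
      mul_le_mul_of_nonneg_left h3 hc
    nlinarith [ih', hgain, h1, h2, h4]
end

section
/- Let f be monotone submodular with f(∅) ≥ 0 on ground set N, k ≥ 1, and consider the sequential algorithm that processes elements of N in an arbitrary fixed order, adding element u to A iff f(A∪{u}) - f(A) ≥ f(A)/k. Let A' be the last k elements added to A (or A itself if |A| ≤ k). Then 4 f(A') ≥ f(O) for any O ⊆ N with |O| ≤ k. -/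
/-- Marginal-gain sum bound for submodular functions. -/
lemma stmt15_sum_marg {α : Type*} [DecidableEq α] (f : Finset α → ℝ)
    (hsub : ∀ S T : Finset α, S ⊆ T → ∀ x ∉ T,
      f (insert x T) - f T ≤ f (insert x S) - f S)
    (A : Finset α) :
    ∀ S : Finset α, (∀ x ∈ S, x ∉ A) →
      f (S ∪ A) ≤ f A + ∑ x ∈ S, (f (insert x A) - f A) := by
  intro S
  induction S using Finset.induction_on with
  | empty => simp
  | @insert a s ha ih =>
    intro hd
    have haA : a ∉ A := hd a (Finset.mem_insert_self a s)
    have hds : ∀ x ∈ s, x ∉ A := fun x hx => hd x (Finset.mem_insert_of_mem hx)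
    have hanot : a ∉ s ∪ A := by
      simp only [Finset.mem_union]
      tauto
    have h1 : f (insert a (s ∪ A)) - f (s ∪ A) ≤ f (insert a A) - f A :=
      hsub A (s ∪ A) Finset.subset_union_right a hanot
    have h2 := ih hds
    rw [Finset.insert_union, Finset.sum_insert ha]
    linarith

/-- Subadditivity-type bound for submodular functions. -/
lemma stmt15_union_bound {α : Type*} [DecidableEq α] (f : Finset α → ℝ)
    (hsub : ∀ S T : Finset α, S ⊆ T → ∀ x ∉ T,
      f (insert x T) - f T ≤ f (insert x S) - f S)
    (T : Finset α) :
    ∀ B : Finset α, (∀ x ∈ B, x ∉ T) → f (T ∪ B) ≤ f T + f B - f ∅ := by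
  intro B
  induction B using Finset.induction_on with
  | empty => simp
  | @insert a s ha ih =>
    intro hd
    have haT : a ∉ T := hd a (Finset.mem_insert_self a s)
    have hds : ∀ x ∈ s, x ∉ T := fun x hx => hd x (Finset.mem_insert_of_mem hx)
    have hanot : a ∉ T ∪ s := by
      simp only [Finset.mem_union]
      tauto
    have h1 : f (insert a (T ∪ s)) - f (T ∪ s) ≤ f (insert a s) - f s :=
      hsub s (T ∪ s) Finset.subset_union_right a hanot
    have h2 := ih hds
    rw [Finset.union_insert]
    linarith

/-- the sequential algorithm processing the ground set `N` in a fixed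
order, adding `u` iff its marginal gain is at least `f(A)/k`, returns in its last-`k`
suffix `A'` a set with `4 f(A') ≥ f(O)` for every `O ⊆ N` with `|O| ≤ k`. -/
theorem stmt15 {α : Type*} [DecidableEq α] (f : Finset α → ℝ)
    (hmono : ∀ S T : Finset α, S ⊆ T → f S ≤ f T)
    (hsub : ∀ S T : Finset α, S ⊆ T → ∀ x ∉ T,
      f (insert x T) - f T ≤ f (insert x S) - f S)
    (hempty : 0 ≤ f ∅)
    (k : ℕ) (hk : 1 ≤ k)
    (N : Finset α) (n : ℕ) (hn : n = N.card)
    (e : ℕ → α) (heN : (Finset.range n).image e = N)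
    (heinj : ∀ i < n, ∀ j < n, e i = e j → i = j)
    (Aseq : ℕ → Finset α) (hA0 : Aseq 0 = ∅)
    (hstep : ∀ i < n, Aseq (i + 1) =
      if f (Aseq i) / k ≤ f (insert (e i) (Aseq i)) - f (Aseq i)
      then insert (e i) (Aseq i) else Aseq i)
    (A' : Finset α)
    (hA' : ((Aseq n).card ≤ k ∧ A' = Aseq n) ∨
      (∃ j ≤ n, A' = Aseq n \ Aseq j ∧ A'.card = k))
    (O : Finset α) (hO : O ⊆ N) (hOk : O.card ≤ k) :
    f O ≤ 4 * f A' := by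
  have hkR : (0:ℝ) < (k:ℝ) := by exact_mod_cast hk
  have hf0 : ∀ S : Finset α, 0 ≤ f S :=
    fun S => le_trans hempty (hmono ∅ S (Finset.empty_subset S))
  -- step monotone
  have hstep' : ∀ i < n, Aseq i ⊆ Aseq (i + 1) := by
    intro i hi
    rw [hstep i hi]
    split
    · exact Finset.subset_insert _ _
    · exact subset_rfl
  have hsubseq : ∀ i j, i ≤ j → j ≤ n → Aseq i ⊆ Aseq j := by
    intro i j hij
    induction j, hij using Nat.le_induction with
    | base => exact fun _ => subset_rfl
    | succ m hm ih =>
      intro hmn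
      exact (ih (le_trans (Nat.le_succ m) hmn)).trans
        (hstep' m (Nat.lt_of_succ_le hmn))
  -- marginal bound for rejected optimal elements
  have hmarg : ∀ o ∈ O \ Aseq n,
      f (insert o (Aseq n)) - f (Aseq n) ≤ f (Aseq n) / k := by
    intro o ho
    obtain ⟨hoO, hoA⟩ := Finset.mem_sdiff.mp ho
    have hoN : o ∈ N := hO hoO
    rw [← heN] at hoN
    obtain ⟨j, hj, hje⟩ := Finset.mem_image.mp hoN
    rw [Finset.mem_range] at hj
    have hcond : ¬ (f (Aseq j) / k ≤ f (insert (e j) (Aseq j)) - f (Aseq j)) := by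
      intro h
      apply hoA
      have h1 : o ∈ Aseq (j + 1) := by
        rw [hstep j hj, if_pos h, ← hje]
        exact Finset.mem_insert_self _ _
      exact hsubseq (j + 1) n (Nat.succ_le_of_lt hj) le_rfl h1
    push_neg at hcond
    rw [hje] at hcond
    have h1 : f (insert o (Aseq n)) - f (Aseq n)
        ≤ f (insert o (Aseq j)) - f (Aseq j) :=
      hsub (Aseq j) (Aseq n) (hsubseq j n hj.le le_rfl) o hoA
    have h2 : f (Aseq j) / k ≤ f (Aseq n) / k := by
      have := hmono _ _ (hsubseq j n hj.le le_rfl)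
      gcongr
    linarith
  -- f O ≤ 2 f (Aseq n)
  have hO2 : f O ≤ 2 * f (Aseq n) := by
    have hsubO : O ⊆ (O \ Aseq n) ∪ Aseq n := by
      intro x hx
      simp only [Finset.mem_union, Finset.mem_sdiff]
      by_cases h : x ∈ Aseq n
      · exact Or.inr h
      · exact Or.inl ⟨hx, h⟩
    have h1 : f O ≤ f ((O \ Aseq n) ∪ Aseq n) := hmono _ _ hsubO
    have h2 := stmt15_sum_marg f hsub (Aseq n) (O \ Aseq n)
      (fun x hx => (Finset.mem_sdiff.mp hx).2)
    have h3 : ∑ x ∈ O \ Aseq n, (f (insert x (Aseq n)) - f (Aseq n))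
        ≤ ((O \ Aseq n).card : ℝ) * (f (Aseq n) / k) := by
      calc ∑ x ∈ O \ Aseq n, (f (insert x (Aseq n)) - f (Aseq n))
          ≤ ∑ _x ∈ O \ Aseq n, (f (Aseq n) / k) :=
            Finset.sum_le_sum (fun x hx => hmarg x hx)
        _ = ((O \ Aseq n).card : ℝ) * (f (Aseq n) / k) := by
            rw [Finset.sum_const, nsmul_eq_mul]
    have hcard : ((O \ Aseq n).card : ℝ) ≤ (k : ℝ) := by
      exact_mod_cast le_trans (Finset.card_le_card (Finset.sdiff_subset)) hOk
    have h4 : ((O \ Aseq n).card : ℝ) * (f (Aseq n) / k)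
        ≤ (k : ℝ) * (f (Aseq n) / k) := by
      exact mul_le_mul_of_nonneg_right hcard (div_nonneg (hf0 _) hkR.le)
    have h5 : (k : ℝ) * (f (Aseq n) / k) = f (Aseq n) := by
      field_simp
    linarith
  rcases hA' with ⟨_, rfl⟩ | ⟨j, hjn, hA'eq, hcardA'⟩
  · linarith [hf0 (Aseq n)]
  · have hsubj : Aseq j ⊆ Aseq n := hsubseq j n hjn le_rfl
    -- growth lemma
    have growth : ∀ m, j ≤ m → m ≤ n →
        f (Aseq j) + (((Aseq m).card - (Aseq j).card : ℕ) : ℝ) * (f (Aseq j) / k)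
          ≤ f (Aseq m) := by
      intro m hjm
      induction m, hjm using Nat.le_induction with
      | base => intro _; simp
      | succ m hm ih =>
        intro hmn
        have hmn' : m < n := Nat.lt_of_succ_le hmn
        have ihm := ih (le_trans (Nat.le_succ m) hmn)
        have hjm' : Aseq j ⊆ Aseq m := hsubseq j m hm (le_of_lt hmn')
        rw [hstep m hmn']
        split_ifs with hc
        · by_cases hmem : e m ∈ Aseq m
          · rw [Finset.insert_eq_self.mpr hmem]; exact ihm
          · have hcardm : (insert (e m) (Aseq m)).card = (Aseq m).card + 1 :=
              Finset.card_insert_of_notMem hmem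
            have hle : (Aseq j).card ≤ (Aseq m).card := Finset.card_le_card hjm'
            rw [hcardm, Nat.succ_sub hle]
            push_cast
            have hfm : f (Aseq j) ≤ f (Aseq m) := hmono _ _ hjm'
            have hdiv : f (Aseq j) / k ≤ f (Aseq m) / k := by gcongr
            have hexp : ((((Aseq m).card - (Aseq j).card : ℕ) : ℝ) + 1)
                * (f (Aseq j) / k)
                = (((Aseq m).card - (Aseq j).card : ℕ) : ℝ) * (f (Aseq j) / k)
                  + f (Aseq j) / k := by ring
            rw [hexp]
            linarith
        · exact ihm
    have hsd : (Aseq n).card - (Aseq j).card = k := by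
      rw [← Finset.card_sdiff_of_subset hsubj, ← hA'eq, hcardA']
    have hg := growth n hjn le_rfl
    rw [hsd] at hg
    have hkk : (k : ℝ) * (f (Aseq j) / k) = f (Aseq j) := by field_simp
    rw [hkk] at hg
    -- f (Aseq n) ≤ f A' + f (Aseq j)
    have hunion : A' ∪ Aseq j = Aseq n := by
      rw [hA'eq]; exact Finset.sdiff_union_of_subset hsubj
    have hd : ∀ x ∈ Aseq j, x ∉ A' := by
      intro x hx
      rw [hA'eq]
      simp only [Finset.mem_sdiff, not_and, not_not]
      intro _; exact hx
    have hub := stmt15_union_bound f hsub A' (Aseq j) hd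
    rw [hunion] at hub
    linarith
end

section
/- Let f be monotone submodular, k ≥ 1, and O an optimal solution with |O| ≤ k. Let A, V ⊆ N be such that: (i) for every o ∈ O \ V there is a set A_{j(o)} ⊆ A with f(A_{j(o)} ∪ {o}) - f(A_{j(o)}) < f(A_{j(o)})/k, and (ii) f monotone. Then f(O \ V) ≤ 2 f(A). Consequently, f(O) ≤ f(O ∩ V) + f(O \ V) ≤ f(V) + 2f(A), assuming O ∩ V ⊆ V. -/
/-- if every `o ∈ O \ V` was filtered (has some `B ⊆ A` with gain
below `f B / k`), then `f (O \ V) ≤ 2 f A`, and consequently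
`f O ≤ f V + 2 f A`. -/
theorem stmt17 {α : Type*} [DecidableEq α] (f : Finset α → ℝ)
    (hmono : ∀ S T : Finset α, S ⊆ T → f S ≤ f T)
    (hsub : ∀ S T : Finset α, S ⊆ T → ∀ x ∉ T,
      f (insert x T) - f T ≤ f (insert x S) - f S)
    (hempty : 0 ≤ f ∅)
    (k : ℕ) (hk : 1 ≤ k)
    (O : Finset α) (hOk : O.card ≤ k)
    (hopt : ∀ S : Finset α, S.card ≤ k → f S ≤ f O)
    (A V : Finset α)
    (hfilter : ∀ o ∈ O \ V, ∃ B ⊆ A, f (insert o B) - f B < f B / k) :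
    f (O \ V) ≤ 2 * f A ∧ f O ≤ f V + 2 * f A := by
  have hfA : 0 ≤ f A := le_trans hempty (hmono ∅ A (Finset.empty_subset _))
  have hkpos : (0:ℝ) < (k:ℝ) := by exact_mod_cast hk
  -- key: f (A ∪ S) ≤ f A + ∑ marginals
  have key : ∀ S : Finset α, f (A ∪ S) ≤ f A + ∑ o ∈ S, (f (insert o A) - f A) := by
    intro S
    induction S using Finset.induction_on with
    | empty => simp
    | @insert x S hx ih =>
      rw [Finset.union_insert, Finset.sum_insert hx]
      by_cases hxAS : x ∈ A ∪ S
      · rw [Finset.insert_eq_self.mpr hxAS]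
        have h0 : 0 ≤ f (insert x A) - f A := by
          have := hmono A (insert x A) (Finset.subset_insert _ _)
          linarith
        linarith
      · have h1 := hsub A (A ∪ S) Finset.subset_union_left x hxAS
        linarith
  -- each marginal small
  have hterm : ∀ o ∈ O \ V, f (insert o A) - f A ≤ f A / k := by
    intro o ho
    obtain ⟨B, hBA, hB⟩ := hfilter o ho
    by_cases hoA : o ∈ A
    · rw [Finset.insert_eq_self.mpr hoA]
      simpa using div_nonneg hfA hkpos.le
    · have h1 := hsub B A hBA o hoA
      have h2 : f B / k ≤ f A / k := by
        gcongr
        exact hmono B A hBA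
      linarith
  have hsum : ∑ o ∈ O \ V, (f (insert o A) - f A) ≤ f A := by
    calc ∑ o ∈ O \ V, (f (insert o A) - f A)
        ≤ ∑ _o ∈ O \ V, f A / k := Finset.sum_le_sum hterm
      _ = (O \ V).card * (f A / k) := by rw [Finset.sum_const, nsmul_eq_mul]
      _ ≤ k * (f A / k) := by
          apply mul_le_mul_of_nonneg_right _ (div_nonneg hfA hkpos.le)
          exact_mod_cast le_trans (Finset.card_le_card (Finset.sdiff_subset)) hOk
      _ = f A := by field_simp
  have h1 : f (O \ V) ≤ 2 * f A := by
    have := hmono (O \ V) (A ∪ (O \ V)) Finset.subset_union_right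
    have := key (O \ V)
    linarith
  refine ⟨h1, ?_⟩
  -- general submodularity: for C ⊆ D, f (D ∪ S) - f D ≤ f (C ∪ S) - f C
  have gen : ∀ S C D : Finset α, C ⊆ D → f (D ∪ S) - f D ≤ f (C ∪ S) - f C := by
    intro S
    induction S using Finset.induction_on with
    | empty => intro C D _; simp
    | @insert x S hx ih =>
      intro C D hCD
      rw [Finset.union_insert, Finset.union_insert]
      by_cases hxCS : x ∈ C ∪ S
      · rw [Finset.insert_eq_self.mpr hxCS,
          Finset.insert_eq_self.mpr (Finset.union_subset_union hCD (le_refl S) hxCS)]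
        exact ih C D hCD
      · by_cases hxDS : x ∈ D ∪ S
        · rw [Finset.insert_eq_self.mpr hxDS]
          have h0 := hmono (C ∪ S) (insert x (C ∪ S)) (Finset.subset_insert _ _)
          have := ih C D hCD
          linarith
        · have h1 := hsub (C ∪ S) (D ∪ S) (Finset.union_subset_union hCD (le_refl S)) x hxDS
          have := ih C D hCD
          linarith
  have hdecomp : f O ≤ f (O ∩ V) + f (O \ V) := by
    have hO : (O ∩ V) ∪ (O \ V) = O := by
      ext a; simp [Finset.mem_union, Finset.mem_inter, Finset.mem_sdiff]; tauto
    have h2 := gen (O \ V) ∅ (O ∩ V) (Finset.empty_subset _)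
    rw [hO, Finset.empty_union] at h2
    linarith
  have h3 : f (O ∩ V) ≤ f V := hmono _ _ Finset.inter_subset_right
  linarith
end
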